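/- arXiv:1702.00736 — 9 statements merged into one kernel-verified Lean document; each statement's English description precedes it below -/
import Mathlib

section
/- Let A be a set of letters, Γ ⊆ A a finite subset, and w ∈ Γ*. Let w₀ be the Γ-block compression of w (with fresh letters outside Γ), and for i = 1,…,k let wᵢ be the (Γℓⁱ,Γrⁱ)-pair compression of w_{i−1}, where for each i the sets Γℓⁱ and Γrⁱ form a partition of Γ and the fresh letters used lie outside Γ. Assume that every ordered pair (a,b) ∈ Γ × Γ with a ≠ b is covered by some partition, i.e., there is some i ∈ {1,…,k} with a ∈ Γℓⁱ and b ∈ Γrⁱ. Then 3·|w_k| ≤ 2·|w| + 1. -/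
/-!
Give the letters of `Γ` weight 1 and all other letters weight 2, so that `w ∈ Γ*` has weight
`|w|`. Neither compression increases the weight: it replaces at least two letters by a single
letter of weight at most 2. Block compression leaves no two equal letters of `Γ` adjacent, and a
pair compression with fresh letters creates no new adjacent pair of `Γ`-letters while destroying
all its `(Γℓ, Γr)`-pairs. By the covering hypothesis `w_k` thus has no two adjacent letters of
`Γ`, so every `Γ`-letter of `w_k` except possibly the last is followed by a letter of weight 2,
whence `3·|w_k| ≤ 2·weight(w_k) + 1 ≤ 2·|w| + 1`.
-/

/-- The Γ-block compression of a word: every maximal block `a^ℓ` with `a ∈ Γ`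
and `ℓ ≥ 2` is replaced by the single letter `d a ℓ`; all other letters are kept. -/
def BC {A : Type*} [DecidableEq A] (Γ : Finset A) (d : A → ℕ → A) : List A → List A
  | [] => []
  | a :: w =>
    (if a ∈ Γ ∧ 2 ≤ (w.takeWhile (· = a)).length + 1
      then [d a ((w.takeWhile (· = a)).length + 1)]
      else List.replicate ((w.takeWhile (· = a)).length + 1) a)
    ++ BC Γ d (w.dropWhile (· = a))
  termination_by w => w.length
  decreasing_by
    simp only [List.length_cons]
    exact Nat.lt_succ_of_le (List.dropWhile_sublist _).length_le
/-- The (Γℓ,Γr)-pair compression of a word: every occurrence of a two-letter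
factor `a b` with `a ∈ Gl` and `b ∈ Gr` is replaced by the single letter `c a b`,
proceeding from left to right. -/
def PC {A : Type*} [DecidableEq A] (Gl Gr : Finset A) (c : A → A → A) : List A → List A
  | [] => []
  | [a] => [a]
  | a :: b :: w =>
    if a ∈ Gl ∧ b ∈ Gr then c a b :: PC Gl Gr c w
    else a :: PC Gl Gr c (b :: w)

namespace Compression

variable {A : Type*} [DecidableEq A]

def weight (Γ : Finset A) (u : List A) : ℕ := (u.map fun a => if a ∈ Γ then 1 else 2).sum

variable {Γ : Finset A}

@[simp] lemma weight_nil : weight Γ [] = 0 := rfl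

@[simp] lemma weight_cons (a : A) (u : List A) :
    weight Γ (a :: u) = (if a ∈ Γ then 1 else 2) + weight Γ u := rfl

lemma weight_append (u v : List A) : weight Γ (u ++ v) = weight Γ u + weight Γ v := by
  simp [weight]

lemma length_le_weight (u : List A) : u.length ≤ weight Γ u := by
  induction u with
  | nil => simp
  | cons a u ih => simp only [weight_cons, List.length_cons]; split_ifs <;> omega

lemma weight_le_two_mul_length (u : List A) : weight Γ u ≤ 2 * u.length := by
  induction u with
  | nil => simp
  | cons a u ih => simp only [weight_cons, List.length_cons]; split_ifs <;> omega

lemma weight_eq_length {u : List A} (hu : ∀ a ∈ u, a ∈ Γ) : weight Γ u = u.length := by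
  induction u with
  | nil => simp
  | cons a u ih =>
    simp only [List.mem_cons, forall_eq_or_imp] at hu
    simp [hu.1, ih hu.2, add_comm]

lemma weight_PC_le (Gl Gr : Finset A) (c : A → A → A) (u : List A) :
    weight Γ (PC Gl Gr c u) ≤ weight Γ u := by
  induction u using PC.induct Gl Gr with
  | case1 | case2 => simp [PC]
  | case3 x y v hxy ih =>
    rw [PC, if_pos hxy]
    have hcxy := weight_le_two_mul_length (Γ := Γ) [c x y]
    have hpair := length_le_weight (Γ := Γ) [x, y]
    simp only [weight_cons, weight_nil, List.length_cons, List.length_nil] at hcxy hpair ⊢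
    omega
  | case4 x y v hxy ih =>
    rw [PC, if_neg hxy]
    simp only [weight_cons] at ih ⊢
    omega

lemma weight_BC_le (d : A → ℕ → A) (u : List A) : weight Γ (BC Γ d u) ≤ weight Γ u := by
  induction u using BC.induct with
  | case1 => simp [BC]
  | case2 a w ih =>
    rw [BC]
    set n := (w.takeWhile (· = a)).length
    have hblock : a :: w = List.replicate (n + 1) a ++ w.dropWhile (· = a) := by
      have htake : w.takeWhile (· = a) = List.replicate n a :=
        List.eq_replicate_iff.2 ⟨rfl, fun b hb => by simpa using List.mem_takeWhile_imp hb⟩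
      rw [List.replicate_succ, List.cons_append, ← htake, List.takeWhile_append_dropWhile]
    rw [hblock, weight_append, weight_append]
    split_ifs with hcomp
    · have hd := weight_le_two_mul_length (Γ := Γ) [d a (n + 1)]
      have hrep := length_le_weight (Γ := Γ) (List.replicate (n + 1) a)
      simp only [List.length_singleton, List.length_replicate] at hd hrep
      omega
    · omega

lemma head?_PC_of_mem {Gl Gr : Finset A} {c : A → A → A}
    (hfresh : ∀ x ∈ Gl, ∀ y ∈ Gr, c x y ∉ Γ) {u : List A} {h : A}
    (hh : (PC Gl Gr c u).head? = some h) (hΓ : h ∈ Γ) : u.head? = some h := by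
  match u with
  | [] => simp [PC] at hh
  | [a] => simpa [PC] using hh
  | a :: b :: v =>
    rw [PC] at hh
    split_ifs at hh with hab
    · simp only [List.head?_cons, Option.some.injEq] at hh
      exact absurd hΓ (hh ▸ hfresh a hab.1 b hab.2)
    · simpa using hh

lemma head?_BC_of_mem {d : A → ℕ → A} (hfresh : ∀ a ∈ Γ, ∀ ℓ, 2 ≤ ℓ → d a ℓ ∉ Γ)
    {u : List A} {h : A} (hh : (BC Γ d u).head? = some h) (hΓ : h ∈ Γ) : u.head? = some h := by
  match u with
  | [] => simp [BC] at hh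
  | a :: w =>
    rw [BC] at hh
    split_ifs at hh with hcomp
    · simp only [List.cons_append, List.nil_append, List.head?_cons, Option.some.injEq] at hh
      exact absurd hΓ (hh ▸ hfresh a hcomp.1 _ hcomp.2)
    · simpa [List.replicate_succ] using hh

lemma infix_of_infix_PC {Gl Gr : Finset A} {c : A → A → A}
    (hfresh : ∀ x ∈ Gl, ∀ y ∈ Gr, c x y ∉ Γ) {u : List A} {a b : A}
    (hab : [a, b] <:+: PC Gl Gr c u) (ha : a ∈ Γ) (hb : b ∈ Γ) :
    [a, b] <:+: u ∧ ¬(a ∈ Gl ∧ b ∈ Gr) := by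
  induction u using PC.induct Gl Gr with
  | case1 | case2 => exact absurd hab.length_le (by simp [PC])
  | case3 x y v hxy ih =>
    rw [PC, if_pos hxy] at hab
    rcases List.infix_cons_iff.1 hab with ⟨t, ht⟩ | hab
    · simp only [List.cons_append, List.nil_append, List.cons.injEq] at ht
      exact absurd (ht.1 ▸ ha) (hfresh x hxy.1 y hxy.2)
    · exact (ih hab).imp_left fun h => List.infix_cons (List.infix_cons h)
  | case4 x y v hxy ih =>
    rw [PC, if_neg hxy] at hab
    rcases List.infix_cons_iff.1 hab with ⟨t, ht⟩ | hab
    · simp only [List.cons_append, List.nil_append, List.cons.injEq] at ht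
      obtain ⟨rfl, hbt⟩ := ht
      have hy : (y :: v).head? = some b :=
        head?_PC_of_mem hfresh (by rw [← hbt]; rfl) hb
      obtain rfl : y = b := by simpa using hy
      exact ⟨⟨[], v, rfl⟩, hxy⟩
    · exact (ih hab).imp_left List.infix_cons

lemma ne_of_infix_BC {d : A → ℕ → A} (hfresh : ∀ a ∈ Γ, ∀ ℓ, 2 ≤ ℓ → d a ℓ ∉ Γ)
    {u : List A} (hu : ∀ x ∈ u, x ∈ Γ) {a b : A}
    (hab : [a, b] <:+: BC Γ d u) (ha : a ∈ Γ) (hb : b ∈ Γ) : a ≠ b := by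
  induction u using BC.induct with
  | case1 => simp [BC] at hab
  | case2 x w ih =>
    have hrest : ∀ z ∈ w.dropWhile (· = x), z ∈ Γ := fun z hz =>
      hu z (List.mem_cons_of_mem x ((List.dropWhile_sublist _).subset hz))
    rw [BC] at hab
    split_ifs at hab with hcomp
    · rcases List.infix_cons_iff.1 hab with ⟨t, ht⟩ | hab
      · simp only [List.cons_append, List.nil_append, List.cons.injEq] at ht
        exact absurd (ht.1 ▸ ha) (hfresh x hcomp.1 _ hcomp.2)
      · exact ih hrest hab
    · have hn : (w.takeWhile (· = x)).length = 0 := by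
        by_contra hn
        exact hcomp ⟨hu x List.mem_cons_self, by omega⟩
      simp only [hn, zero_add, List.replicate_one, List.singleton_append] at hab
      rcases List.infix_cons_iff.1 hab with ⟨t, ht⟩ | hab
      · simp only [List.cons_append, List.nil_append, List.cons.injEq] at ht
        obtain ⟨rfl, hbt⟩ := ht
        have hhead := List.head?_dropWhile_not (· = a) w
        rw [head?_BC_of_mem hfresh (by rw [← hbt]; rfl) hb] at hhead
        simpa [eq_comm] using hhead
      · exact ih hrest hab

section Iteration

variable {k : ℕ} {Gl Gr : ℕ → Finset A} {c : ℕ → A → A → A} {ws : ℕ → List A}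

lemma weight_le_of_PC_steps
    (hstep : ∀ i, 1 ≤ i → i ≤ k → ws i = PC (Gl i) (Gr i) (c i) (ws (i - 1)))
    {i : ℕ} (hik : i ≤ k) : weight Γ (ws i) ≤ weight Γ (ws 0) := by
  induction i with
  | zero => rfl
  | succ i ih =>
    rw [hstep (i + 1) (by omega) hik, Nat.add_sub_cancel]
    exact (weight_PC_le _ _ _ _).trans (ih (by omega))

lemma infix_of_PC_steps
    (hfresh : ∀ i, 1 ≤ i → i ≤ k → ∀ a ∈ Gl i, ∀ b ∈ Gr i, c i a b ∉ Γ)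
    (hstep : ∀ i, 1 ≤ i → i ≤ k → ws i = PC (Gl i) (Gr i) (c i) (ws (i - 1)))
    {i : ℕ} (hik : i ≤ k) {a b : A} (hab : [a, b] <:+: ws i) (ha : a ∈ Γ) (hb : b ∈ Γ) :
    [a, b] <:+: ws 0 ∧ ∀ j, 1 ≤ j → j ≤ i → ¬(a ∈ Gl j ∧ b ∈ Gr j) := by
  induction i with
  | zero => exact ⟨hab, fun j hj hj0 => by omega⟩
  | succ i ih =>
    rw [hstep (i + 1) (by omega) hik, Nat.add_sub_cancel] at hab
    obtain ⟨hab, hnew⟩ := infix_of_infix_PC (hfresh (i + 1) (by omega) hik) hab ha hb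
    obtain ⟨hab0, hold⟩ := ih (by omega) hab
    refine ⟨hab0, fun j hj hji => ?_⟩
    rcases Nat.lt_or_eq_of_le hji with hji | rfl
    · exact hold j hj (by omega)
    · exact hnew

end Iteration

lemma three_mul_length_le : ∀ u : List A, (∀ a b, [a, b] <:+: u → a ∈ Γ → b ∉ Γ) →
    3 * u.length ≤ 2 * weight Γ u + 1
  | [], _ => by simp
  | [a], _ => by simp only [weight_cons, weight_nil, List.length_singleton]; split_ifs <;> omega
  | a :: b :: v, h => by
    by_cases ha : a ∈ Γ
    · have hb : b ∉ Γ := h a b ⟨[], v, rfl⟩ ha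
      have ih := three_mul_length_le v fun x y hxy => h x y (List.infix_cons (List.infix_cons hxy))
      simp only [weight_cons, ha, hb, if_true, if_false, List.length_cons] at ih ⊢
      omega
    · have ih := three_mul_length_le (b :: v) fun x y hxy => h x y (List.infix_cons hxy)
      simp only [weight_cons, ha, if_false, List.length_cons] at ih ⊢
      omega

end Compression

open Compression

theorem stmt0_general {A : Type*} [DecidableEq A] (Γ : Finset A) (d : A → ℕ → A)
    (hd_fresh : ∀ a ∈ Γ, ∀ ℓ : ℕ, 2 ≤ ℓ → d a ℓ ∉ Γ)
    (k : ℕ) (Gl Gr : ℕ → Finset A) (c : ℕ → A → A → A)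
    (hc_fresh : ∀ i, 1 ≤ i → i ≤ k → ∀ a ∈ Gl i, ∀ b ∈ Gr i, c i a b ∉ Γ)
    (hcover : ∀ a ∈ Γ, ∀ b ∈ Γ, a ≠ b → ∃ i, 1 ≤ i ∧ i ≤ k ∧ a ∈ Gl i ∧ b ∈ Gr i)
    (w : List A) (hw : ∀ a ∈ w, a ∈ Γ)
    (ws : ℕ → List A)
    (h0 : ws 0 = BC Γ d w)
    (hstep : ∀ i, 1 ≤ i → i ≤ k → ws i = PC (Gl i) (Gr i) (c i) (ws (i - 1))) :
    3 * (ws k).length ≤ 2 * w.length + 1 := by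
  have hsep : ∀ a b, [a, b] <:+: ws k → a ∈ Γ → b ∉ Γ := by
    intro a b hab ha hb
    obtain ⟨hab0, hsplit⟩ := infix_of_PC_steps hc_fresh hstep le_rfl hab ha hb
    have hne := ne_of_infix_BC hd_fresh hw (h0 ▸ hab0) ha hb
    obtain ⟨i, hi, hik, hmem⟩ := hcover a ha b hb hne
    exact hsplit i hi hik hmem
  calc 3 * (ws k).length ≤ 2 * weight Γ (ws k) + 1 := three_mul_length_le _ hsep
    _ ≤ 2 * weight Γ (ws 0) + 1 := by gcongr; exact weight_le_of_PC_steps hstep le_rfl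
    _ ≤ 2 * weight Γ w + 1 := by rw [h0]; gcongr; exact weight_BC_le d w
    _ = 2 * w.length + 1 := by rw [weight_eq_length hw]

/-- If `w ∈ Γ*`, `ws 0` is the Γ-block compression of `w`, and `ws i` is
obtained from `ws (i-1)` by the `(Gl i, Gr i)`-pair compression, where each `(Gl i, Gr i)`
is a partition of `Γ` whose fresh letters lie outside `Γ`, and every ordered pair of
distinct letters of `Γ` is covered by some partition, then `3·|ws k| ≤ 2·|w| + 1`. -/
theorem stmt0 {A : Type*} [DecidableEq A] (Γ : Finset A) (d : A → ℕ → A)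
    (hd_fresh : ∀ a ∈ Γ, ∀ ℓ : ℕ, 2 ≤ ℓ → d a ℓ ∉ Γ)
    (hd_inj : ∀ a ∈ Γ, ∀ a' ∈ Γ, ∀ ℓ ℓ' : ℕ, 2 ≤ ℓ → 2 ≤ ℓ' →
      d a ℓ = d a' ℓ' → a = a' ∧ ℓ = ℓ')
    (k : ℕ) (Gl Gr : ℕ → Finset A) (c : ℕ → A → A → A)
    (hunion : ∀ i, 1 ≤ i → i ≤ k → Gl i ∪ Gr i = Γ)
    (hdisj : ∀ i, 1 ≤ i → i ≤ k → Disjoint (Gl i) (Gr i))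
    (hc_fresh : ∀ i, 1 ≤ i → i ≤ k → ∀ a ∈ Gl i, ∀ b ∈ Gr i, c i a b ∉ Γ)
    (hc_inj : ∀ i, 1 ≤ i → i ≤ k → ∀ a ∈ Gl i, ∀ b ∈ Gr i, ∀ a' ∈ Gl i, ∀ b' ∈ Gr i,
      c i a b = c i a' b' → a = a' ∧ b = b')
    (hcover : ∀ a ∈ Γ, ∀ b ∈ Γ, a ≠ b → ∃ i, 1 ≤ i ∧ i ≤ k ∧ a ∈ Gl i ∧ b ∈ Gr i)
    (w : List A) (hw : ∀ a ∈ w, a ∈ Γ)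
    (ws : ℕ → List A)
    (h0 : ws 0 = BC Γ d w)
    (hstep : ∀ i, 1 ≤ i → i ≤ k → ws i = PC (Gl i) (Gr i) (c i) (ws (i - 1))) :
    3 * (ws k).length ≤ 2 * w.length + 1 :=
  stmt0_general Γ d hd_fresh k Gl Gr c hc_fresh hcover w hw ws h0 hstep
end

section
/- Let A be a set of letters, Γℓ and Γr two disjoint finite subsets of A, and c : Γℓ × Γr → A an injective map whose values lie outside Γℓ ∪ Γr. Then for every word w ∈ A*, the (Γℓ,Γr)-pair compression PC(w) contains no two-letter factor ab with a ∈ Γℓ and b ∈ Γr. -/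
/-
Compression rewrites a prefix `a b` with `a ∈ Γℓ`, `b ∈ Γr` and then continues after it, so a
factor `a b` of the output could only arise at a junction: either a fresh letter `c a b` is
followed by something (but `c a b ∉ Γℓ`), or an uncompressed letter `a` is followed by the
first letter of the compression of the remaining word `b w`. That first letter is `b` itself
or a fresh letter `c b b'`, and in the latter case it is not in `Γr`.
-/

namespace PC

variable {A : Type*} [DecidableEq A] {Gl Gr : Finset A} {c : A → A → A}

theorem mem_of_mem_head?_cons (hc : ∀ a ∈ Gl, ∀ b ∈ Gr, c a b ∉ Gr) {b x : A} {w : List A}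
    (hx : x ∈ (PC Gl Gr c (b :: w)).head?) (hxGr : x ∈ Gr) : b ∈ Gr := by
  match w with
  | [] => simp_all [PC]
  | b' :: w =>
    by_cases h : b ∈ Gl ∧ b' ∈ Gr
    · simp only [PC, if_pos h, List.head?_cons, Option.mem_some_iff] at hx
      exact absurd (hx ▸ hxGr) (hc b h.1 b' h.2)
    · simp_all [PC]

theorem isChain (hc_left : ∀ a ∈ Gl, ∀ b ∈ Gr, c a b ∉ Gl)
    (hc_right : ∀ a ∈ Gl, ∀ b ∈ Gr, c a b ∉ Gr) (w : List A) :
    (PC Gl Gr c w).IsChain (fun a b => ¬(a ∈ Gl ∧ b ∈ Gr)) := by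
  induction w using PC.induct Gl Gr with
  | case1 => exact .nil
  | case2 a => exact .singleton a
  | case3 a b w h ih =>
    rw [PC, if_pos h, List.isChain_cons]
    exact ⟨fun _ _ hy => hc_left a h.1 b h.2 hy.1, ih⟩
  | case4 a b w h ih =>
    rw [PC, if_neg h, List.isChain_cons]
    exact ⟨fun _ hx hy => h ⟨hy.1, mem_of_mem_head?_cons hc_right hx hy.2⟩, ih⟩

end PC

theorem stmt2_general {A : Type*} [DecidableEq A] (Gl Gr : Finset A)
    (c : A → A → A)
    (hc_fresh : ∀ a ∈ Gl, ∀ b ∈ Gr, c a b ∉ Gl ∪ Gr)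
    (w : List A) :
    (PC Gl Gr c w).Chain' (fun a b => ¬(a ∈ Gl ∧ b ∈ Gr)) :=
  PC.isChain (fun a ha b hb h => hc_fresh a ha b hb (Finset.mem_union_left _ h))
    (fun a ha b hb h => hc_fresh a ha b hb (Finset.mem_union_right _ h)) w

/-- the (Γℓ,Γr)-pair compression of any word contains no two-letter
factor `a b` with `a ∈ Gl` and `b ∈ Gr`. -/
theorem stmt2 {A : Type*} [DecidableEq A] (Gl Gr : Finset A) (hdisj : Disjoint Gl Gr)
    (c : A → A → A)
    (hc_fresh : ∀ a ∈ Gl, ∀ b ∈ Gr, c a b ∉ Gl ∪ Gr)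
    (hc_inj : ∀ a ∈ Gl, ∀ b ∈ Gr, ∀ a' ∈ Gl, ∀ b' ∈ Gr,
      c a b = c a' b' → a = a' ∧ b = b')
    (w : List A) :
    (PC Gl Gr c w).Chain' (fun a b => ¬(a ∈ Gl ∧ b ∈ Gr)) :=
  stmt2_general Gl Gr c hc_fresh w
end

section
/- Let A be a set of letters, Γℓ and Γr two disjoint finite subsets of A, and c : Γℓ × Γr → A an injective map whose values lie outside Γℓ ∪ Γr. If w, w' ∈ A* are words none of whose letters lie in the range of c, and PC(w) = PC(w'), then w = w'. (In other words, pair compression is injective on such words.) -/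
lemma PC_eq_nil {A : Type*} [DecidableEq A] (Gl Gr : Finset A) (c : A → A → A)
    (v : List A) (hv : PC Gl Gr c v = []) : v = [] := by
  match v with
  | [] => rfl
  | [a] => simp [PC] at hv
  | a :: b :: t =>
    simp only [PC] at hv
    split at hv <;> simp at hv

/-- pair compression is injective on words none of whose letters lie
in the range of `c`. -/
theorem stmt3 {A : Type*} [DecidableEq A] (Gl Gr : Finset A) (hdisj : Disjoint Gl Gr)
    (c : A → A → A)
    (hc_fresh : ∀ a ∈ Gl, ∀ b ∈ Gr, c a b ∉ Gl ∪ Gr)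
    (hc_inj : ∀ a ∈ Gl, ∀ b ∈ Gr, ∀ a' ∈ Gl, ∀ b' ∈ Gr,
      c a b = c a' b' → a = a' ∧ b = b')
    (w w' : List A)
    (hw : ∀ x ∈ w, ∀ a ∈ Gl, ∀ b ∈ Gr, x ≠ c a b)
    (hw' : ∀ x ∈ w', ∀ a ∈ Gl, ∀ b ∈ Gr, x ≠ c a b)
    (h : PC Gl Gr c w = PC Gl Gr c w') :
    w = w' := by
  suffices key : ∀ n (w w' : List A), w.length ≤ n →
      (∀ x ∈ w, ∀ a ∈ Gl, ∀ b ∈ Gr, x ≠ c a b) →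
      (∀ x ∈ w', ∀ a ∈ Gl, ∀ b ∈ Gr, x ≠ c a b) →
      PC Gl Gr c w = PC Gl Gr c w' → w = w' by
    exact key w.length w w' le_rfl hw hw' h
  intro n
  induction n with
  | zero =>
    intro w w' hlen _ _ heq
    have hw0 : w = [] := List.length_eq_zero_iff.mp (Nat.le_zero.mp hlen)
    subst hw0
    have : PC Gl Gr c w' = [] := by simpa [PC] using heq.symm
    exact (PC_eq_nil Gl Gr c w' this).symm
  | succ n ih =>
    intro w w' hlen hw hw' heq
    match w, w' with
    | [], w' =>
      have : PC Gl Gr c w' = [] := by simpa [PC] using heq.symm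
      exact (PC_eq_nil Gl Gr c w' this).symm
    | w, [] =>
      have : PC Gl Gr c w = [] := by simpa [PC] using heq
      exact PC_eq_nil Gl Gr c w this
    | [a], [a'] =>
      simp only [PC, List.cons.injEq] at heq
      rw [heq.1]
    | [a], a' :: b' :: t' =>
      simp only [PC] at heq
      split at heq
      · rename_i h2
        injection heq with ha htail
        exact absurd ha (hw a (by simp) a' h2.1 b' h2.2)
      · injection heq with ha htail
        exact absurd (PC_eq_nil Gl Gr c _ htail.symm) (by simp)
    | a :: b :: t, [a'] =>
      simp only [PC] at heq
      split at heq
      · rename_i h2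
        injection heq with ha htail
        exact absurd ha.symm (hw' a' (by simp) a h2.1 b h2.2)
      · injection heq with ha htail
        exact absurd (PC_eq_nil Gl Gr c _ htail) (by simp)
    | a :: b :: t, a' :: b' :: t' =>
      simp only [PC] at heq
      by_cases h1 : a ∈ Gl ∧ b ∈ Gr <;> by_cases h2 : a' ∈ Gl ∧ b' ∈ Gr
      · rw [if_pos h1, if_pos h2] at heq
        injection heq with hcc htail
        obtain ⟨ha, hb⟩ := hc_inj a h1.1 b h1.2 a' h2.1 b' h2.2 hcc
        have hlt : t.length ≤ n := by
          simp only [List.length_cons] at hlen; omega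
        have := ih t t' hlt (fun x hx => hw x (by simp [hx]))
          (fun x hx => hw' x (by simp [hx])) htail
        rw [ha, hb, this]
      · rw [if_pos h1, if_neg h2] at heq
        injection heq with hcc _
        exact absurd hcc.symm (hw' a' (by simp) a h1.1 b h1.2)
      · rw [if_neg h1, if_pos h2] at heq
        injection heq with hcc _
        exact absurd hcc (hw a (by simp) a' h2.1 b' h2.2)
      · rw [if_neg h1, if_neg h2] at heq
        injection heq with ha htail
        have hlt : (b :: t).length ≤ n := by
          simp only [List.length_cons] at hlen ⊢; omega
        have := ih (b :: t) (b' :: t') hlt (fun x hx => hw x (by simp [List.mem_cons.mp hx]))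
          (fun x hx => hw' x (by simp [List.mem_cons.mp hx])) htail
        rw [ha, this]
end

section
/- Let A be a set of letters, Γ ⊆ A a finite subset, and d : Γ × {ℓ ∈ ℕ | ℓ ≥ 2} → A an injective map whose values lie outside Γ. If w, w' ∈ Γ* satisfy BC(w) = BC(w'), then w = w'. (In other words, Γ-block compression is injective on Γ*.) -/
namespace BlockCompression

variable {A : Type*}

def blockLetter (d : A → ℕ → A) (a : A) (ℓ : ℕ) : A :=
  if 2 ≤ ℓ then d a ℓ else a

theorem blockLetter_injective (Γ : Finset A) (d : A → ℕ → A)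
    (hd_fresh : ∀ a ∈ Γ, ∀ ℓ : ℕ, 2 ≤ ℓ → d a ℓ ∉ Γ)
    (hd_inj : ∀ a ∈ Γ, ∀ a' ∈ Γ, ∀ ℓ ℓ' : ℕ, 2 ≤ ℓ → 2 ≤ ℓ' →
      d a ℓ = d a' ℓ' → a = a' ∧ ℓ = ℓ')
    {a a' : A} (ha : a ∈ Γ) (ha' : a' ∈ Γ) {ℓ ℓ' : ℕ} (hℓ : 1 ≤ ℓ) (hℓ' : 1 ≤ ℓ')
    (h : blockLetter d a ℓ = blockLetter d a' ℓ') : a = a' ∧ ℓ = ℓ' := by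
  unfold blockLetter at h
  by_cases h2 : 2 ≤ ℓ <;> by_cases h2' : 2 ≤ ℓ' <;> simp only [h2, h2', if_true, if_false] at h
  · exact hd_inj a ha a' ha' ℓ ℓ' h2 h2' h
  · exact absurd (h ▸ ha') (hd_fresh a ha ℓ h2)
  · exact absurd (h ▸ ha) (hd_fresh a' ha' ℓ' h2')
  · exact ⟨h, by omega⟩

variable [DecidableEq A]

theorem BC_cons_of_mem {Γ : Finset A} (d : A → ℕ → A) {a : A} (ha : a ∈ Γ) (t : List A) :
    BC Γ d (a :: t) =
      blockLetter d a ((t.takeWhile (· = a)).length + 1) :: BC Γ d (t.dropWhile (· = a)) := by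
  rw [BC, blockLetter]
  by_cases h2 : 2 ≤ (t.takeWhile (· = a)).length + 1
  · rw [if_pos ⟨ha, h2⟩, if_pos h2]
    rfl
  · rw [if_neg fun h => h2 h.2, if_neg h2]
    have hrun : (t.takeWhile (· = a)).length + 1 = 1 := by omega
    rw [hrun]
    rfl

theorem takeWhile_eq_replicate (a : A) (t : List A) :
    t.takeWhile (· = a) = List.replicate (t.takeWhile (· = a)).length a :=
  List.eq_replicate_of_mem fun _ hb => by simpa using List.mem_takeWhile_imp hb

theorem cons_eq_replicate_append_dropWhile (a : A) (t : List A) :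
    a :: t = List.replicate ((t.takeWhile (· = a)).length + 1) a ++ t.dropWhile (· = a) := by
  rw [List.replicate_succ, List.cons_append, ← takeWhile_eq_replicate,
    List.takeWhile_append_dropWhile]

end BlockCompression

open BlockCompression in
/-- Γ-block compression is injective on words over Γ. -/
theorem stmt4 {A : Type*} [DecidableEq A] (Γ : Finset A) (d : A → ℕ → A)
    (hd_fresh : ∀ a ∈ Γ, ∀ ℓ : ℕ, 2 ≤ ℓ → d a ℓ ∉ Γ)
    (hd_inj : ∀ a ∈ Γ, ∀ a' ∈ Γ, ∀ ℓ ℓ' : ℕ, 2 ≤ ℓ → 2 ≤ ℓ' →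
      d a ℓ = d a' ℓ' → a = a' ∧ ℓ = ℓ')
    (w w' : List A) (hw : ∀ a ∈ w, a ∈ Γ) (hw' : ∀ a ∈ w', a ∈ Γ)
    (h : BC Γ d w = BC Γ d w') :
    w = w' := by
  match w, w', hw, hw', h with
  | [], [], _, _, _ => rfl
  | [], a' :: t', _, hw', h => simp [BC, BC_cons_of_mem d (hw' a' List.mem_cons_self)] at h
  | a :: t, [], hw, _, h => simp [BC, BC_cons_of_mem d (hw a List.mem_cons_self)] at h
  | a :: t, a' :: t', hw, hw', h =>
    have ha := hw a List.mem_cons_self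
    have ha' := hw' a' List.mem_cons_self
    rw [BC_cons_of_mem d ha, BC_cons_of_mem d ha', List.cons.injEq] at h
    obtain ⟨rfl, hrun⟩ := blockLetter_injective Γ d hd_fresh hd_inj ha ha'
      (Nat.le_add_left 1 _) (Nat.le_add_left 1 _) h.1
    have hrest := stmt4 Γ d hd_fresh hd_inj _ _
      (fun b hb => hw b (.tail _ ((List.dropWhile_sublist _).subset hb)))
      (fun b hb => hw' b (.tail _ ((List.dropWhile_sublist _).subset hb))) h.2
    rw [cons_eq_replicate_append_dropWhile a t, cons_eq_replicate_append_dropWhile a t', hrun,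
      hrest]
termination_by w.length
decreasing_by exact Nat.lt_succ_of_le (List.dropWhile_sublist _).length_le
end

section
/- Let A be a set of letters, Γℓ and Γr two disjoint finite subsets of A, and c : Γℓ × Γr → A an injective map whose values lie outside Γℓ ∪ Γr. Let u, v ∈ A* and suppose that u is empty, or v is empty, or the last letter of u is not in Γℓ, or the first letter of v is not in Γr. Then PC(u·v) = PC(u)·PC(v). -/
section

variable {A : Type*} [DecidableEq A] (Gl Gr : Finset A) (c : A → A → A)

theorem PC_cons_of_not_pair {a : A} {w : List A}
    (h : ∀ b ∈ w.head?, ¬(a ∈ Gl ∧ b ∈ Gr)) :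
    PC Gl Gr c (a :: w) = a :: PC Gl Gr c w := by
  cases w with
  | nil => rfl
  | cons b w => simp [PC, h b rfl]

theorem PC_append_of_not_pair {u v : List A}
    (h : ∀ a ∈ u.getLast?, ∀ b ∈ v.head?, ¬(a ∈ Gl ∧ b ∈ Gr)) :
    PC Gl Gr c (u ++ v) = PC Gl Gr c u ++ PC Gl Gr c v := by
  induction u using PC.induct Gl Gr with
  | case1 => rfl
  | case2 a => simpa [PC] using PC_cons_of_not_pair Gl Gr c (h a rfl)
  | case3 a b w hab ih =>
    have hw := ih fun x hx => h x (List.mem_getLast?_append_of_mem_getLast? (l₁ := [a, b]) hx)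
    simp only [List.cons_append, PC, if_pos hab, hw]
  | case4 a b w hab ih =>
    have hw := ih fun x hx => h x (by rwa [List.getLast?_cons_cons])
    simp only [List.cons_append, PC, if_neg hab] at hw ⊢
    rw [hw]

end

theorem stmt5_general {A : Type*} [DecidableEq A] (Gl Gr : Finset A)
    (c : A → A → A)
    (u v : List A)
    (h : u = [] ∨ v = [] ∨ (∃ a, u.getLast? = some a ∧ a ∉ Gl) ∨
      (∃ b, v.head? = some b ∧ b ∉ Gr)) :
    PC Gl Gr c (u ++ v) = PC Gl Gr c u ++ PC Gl Gr c v := by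
  refine PC_append_of_not_pair Gl Gr c fun a ha b hb hab => ?_
  rcases h with rfl | rfl | ⟨a', ha', ha'Gl⟩ | ⟨b', hb', hb'Gr⟩
  · simp at ha
  · simp at hb
  · exact ha'Gl (Option.some_injective _ (ha'.symm.trans ha) ▸ hab.1)
  · exact hb'Gr (Option.some_injective _ (hb'.symm.trans hb) ▸ hab.2)

/-- pair compression distributes over a concatenation `u ++ v` provided
`u` is empty, or `v` is empty, or the last letter of `u` is not in `Gl`, or the first
letter of `v` is not in `Gr`. -/
theorem stmt5 {A : Type*} [DecidableEq A] (Gl Gr : Finset A) (hdisj : Disjoint Gl Gr)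
    (c : A → A → A)
    (hc_fresh : ∀ a ∈ Gl, ∀ b ∈ Gr, c a b ∉ Gl ∪ Gr)
    (hc_inj : ∀ a ∈ Gl, ∀ b ∈ Gr, ∀ a' ∈ Gl, ∀ b' ∈ Gr,
      c a b = c a' b' → a = a' ∧ b = b')
    (u v : List A)
    (h : u = [] ∨ v = [] ∨ (∃ a, u.getLast? = some a ∧ a ∉ Gl) ∨
      (∃ b, v.head? = some b ∧ b ∉ Gr)) :
    PC Gl Gr c (u ++ v) = PC Gl Gr c u ++ PC Gl Gr c v :=
  stmt5_general Gl Gr c u v h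
end

section
/- Let A be a set of letters, Γℓ, Γr ⊆ A disjoint finite subsets, c : Γℓ × Γr → A injective with values outside Γℓ ∪ Γr, and let V ⊆ A be a set of variables disjoint from Γℓ ∪ Γr and from the range of c. Let σ be a substitution assigning to each variable X ∈ V a nonempty word σ(X) ∈ A* whose letters are not variables, whose first letter is not in Γr, and whose last letter is not in Γℓ. Define σ'(X) = PC(σ(X)). Then for every word U ∈ A*, σ̂'(PC(U)) = PC(σ̂(U)), where σ̂ and σ̂' denote the monoid morphisms extending σ and σ' that fix every non-variable letter. Consequently, if σ̂(U) = σ̂(V₀) for words U, V₀ ∈ A*, then σ̂'(PC(U)) = σ̂'(PC(V₀)). -/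
/-- The extension of a substitution `σ` (assigning words to the variables in `V`)
to the monoid morphism on words that fixes every non-variable symbol. -/
def substApp {A : Type*} [DecidableEq A] (V : Finset A) (σ : A → List A) (w : List A) : List A :=
  w.flatMap (fun x => if x ∈ V then σ x else [x])


section Aux
variable {A : Type*} [DecidableEq A] (Gl Gr : Finset A) (c : A → A → A)

lemma PC_append : ∀ (w₁ w₂ : List A),
    (∀ a, w₁.getLast? = some a → ∀ b, w₂.head? = some b → ¬(a ∈ Gl ∧ b ∈ Gr)) →
    PC Gl Gr c (w₁ ++ w₂) = PC Gl Gr c w₁ ++ PC Gl Gr c w₂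
  | [], w₂, _ => by simp [PC]
  | [a], w₂, h => by
    cases w₂ with
    | nil => simp [PC]
    | cons b w₂' =>
      have := h a (by simp) b (by simp)
      simp [PC, this]
  | a :: b :: w₁, w₂, h => by
    by_cases hab : a ∈ Gl ∧ b ∈ Gr
    · have ih := PC_append w₁ w₂ (fun x hx y hy => h x (by
        cases w₁ with
        | nil => simp at hx
        | cons z w => rw [List.getLast?_cons_cons, List.getLast?_cons_cons]; exact hx) y hy)
      simp [PC, hab, ih]
    · have ih := PC_append (b :: w₁) w₂ (fun x hx y hy => h x (by
        rw [List.getLast?_cons_cons]; exact hx) y hy)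
      simp only [List.cons_append] at ih ⊢
      rw [show ((a :: b :: (w₁ ++ w₂)) = a :: b :: w₁ ++ w₂) from rfl]
      simp [PC, hab, ih]
  termination_by w₁ _ _ => w₁.length

lemma substApp_cons (V : Finset A) (σ : A → List A) (x : A) (w : List A) :
    substApp V σ (x :: w) = (if x ∈ V then σ x else [x]) ++ substApp V σ w := by
  simp [substApp]

lemma main_lemma (V : Finset A) (hV : ∀ X ∈ V, X ∉ Gl ∪ Gr)
    (hVc : ∀ a ∈ Gl, ∀ b ∈ Gr, c a b ∉ V)
    (σ : A → List A) (hσ_ne : ∀ X ∈ V, σ X ≠ [])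
    (hσ_head : ∀ X ∈ V, ∀ b, (σ X).head? = some b → b ∉ Gr)
    (hσ_last : ∀ X ∈ V, ∀ a, (σ X).getLast? = some a → a ∉ Gl)
    (σ' : A → List A) (hσ' : ∀ X, σ' X = PC Gl Gr c (σ X)) :
    ∀ U : List A, substApp V σ' (PC Gl Gr c U) = PC Gl Gr c (substApp V σ U)
  | [] => by simp [PC, substApp]
  | [x] => by
    by_cases hx : x ∈ V
    · simp [PC, substApp, hx, hσ' x]
    · simp [PC, substApp, hx]
  | a :: b :: U => by
    have ih1 := main_lemma V hV hVc σ hσ_ne hσ_head hσ_last σ' hσ' U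
    have ih2 := main_lemma V hV hVc σ hσ_ne hσ_head hσ_last σ' hσ' (b :: U)
    by_cases hab : a ∈ Gl ∧ b ∈ Gr
    · have ha : a ∉ V := fun h => hV a h (Finset.mem_union_left _ hab.1)
      have hb : b ∉ V := fun h => hV b h (Finset.mem_union_right _ hab.2)
      have hcab : c a b ∉ V := hVc a hab.1 b hab.2
      rw [show PC Gl Gr c (a :: b :: U) = c a b :: PC Gl Gr c U from by simp [PC, hab]]
      rw [substApp_cons, substApp_cons, substApp_cons]
      simp only [if_neg ha, if_neg hb, if_neg hcab]
      rw [ih1]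
      rw [show ([a] ++ ([b] ++ substApp V σ U)) = a :: b :: substApp V σ U from rfl]
      simp [PC, hab]
    · set w₁ := if a ∈ V then σ a else [a] with hw₁
      set rest := substApp V σ (b :: U) with hrest
      have key : PC Gl Gr c (w₁ ++ rest) = PC Gl Gr c w₁ ++ PC Gl Gr c rest := by
        apply PC_append
        intro x hx y hy h'
        have hyGr : y ∈ Gr := h'.2
        -- analyse head of rest
        have hrest' : rest = (if b ∈ V then σ b else [b]) ++ substApp V σ U := substApp_cons ..
        by_cases hbV : b ∈ V
        · cases hσb : σ b with
          | nil => exact hσ_ne b hbV hσb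
          | cons z zs =>
            have : rest.head? = some z := by
              rw [hrest', if_pos hbV, hσb]; rfl
            rw [this] at hy
            obtain rfl : z = y := by injection hy
            exact hσ_head b hbV _ (by rw [hσb]; rfl) hyGr
        · have : rest.head? = some b := by rw [hrest', if_neg hbV]; rfl
          rw [this] at hy
          obtain rfl : b = y := by injection hy
          -- now x: last of w₁
          by_cases haV : a ∈ V
          · rw [hw₁, if_pos haV] at hx
            exact hσ_last a haV x hx h'.1
          · rw [hw₁, if_neg haV] at hx
            obtain rfl : a = x := by simpa using hx
            exact hab ⟨h'.1, hyGr⟩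
      rw [show PC Gl Gr c (a :: b :: U) = a :: PC Gl Gr c (b :: U) from by simp [PC, hab]]
      rw [substApp_cons, substApp_cons V σ a (b :: U), ih2, ← hrest, key]
      congr 1
      by_cases haV : a ∈ V
      · rw [hw₁, if_pos haV, if_pos haV, hσ' a]
      · rw [hw₁, if_neg haV, if_neg haV]; simp [PC]
  termination_by U => U.length

end Aux

/-- pair compression commutes with substitution: if every variable `X ∈ V`
is mapped by `σ` to a nonempty word over non-variables whose first letter is not in `Gr`
and whose last letter is not in `Gl`, and `σ' X = PC (σ X)`, then
`σ̂' (PC U) = PC (σ̂ U)` for every word `U`; consequently `σ̂ U = σ̂ V₀` implies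
`σ̂' (PC U) = σ̂' (PC V₀)`. -/
theorem stmt6 {A : Type*} [DecidableEq A] (Gl Gr : Finset A) (hdisj : Disjoint Gl Gr)
    (c : A → A → A)
    (hc_fresh : ∀ a ∈ Gl, ∀ b ∈ Gr, c a b ∉ Gl ∪ Gr)
    (hc_inj : ∀ a ∈ Gl, ∀ b ∈ Gr, ∀ a' ∈ Gl, ∀ b' ∈ Gr,
      c a b = c a' b' → a = a' ∧ b = b')
    (V : Finset A)
    (hV : ∀ X ∈ V, X ∉ Gl ∪ Gr)
    (hVc : ∀ a ∈ Gl, ∀ b ∈ Gr, c a b ∉ V)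
    (σ : A → List A)
    (hσ_ne : ∀ X ∈ V, σ X ≠ [])
    (hσ_novar : ∀ X ∈ V, ∀ y ∈ σ X, y ∉ V)
    (hσ_head : ∀ X ∈ V, ∀ b, (σ X).head? = some b → b ∉ Gr)
    (hσ_last : ∀ X ∈ V, ∀ a, (σ X).getLast? = some a → a ∉ Gl)
    (σ' : A → List A)
    (hσ' : ∀ X, σ' X = PC Gl Gr c (σ X)) :
    (∀ U : List A,
      substApp V σ' (PC Gl Gr c U) = PC Gl Gr c (substApp V σ U)) ∧
    (∀ U V₀ : List A, substApp V σ U = substApp V σ V₀ →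
      substApp V σ' (PC Gl Gr c U) = substApp V σ' (PC Gl Gr c V₀)) := by
  have main := main_lemma Gl Gr c V hV hVc σ hσ_ne hσ_head hσ_last σ' hσ'
  exact ⟨main, fun U V₀ h => by rw [main U, main V₀, h]⟩
end

section
/- Let Γ (letters) and V (variables) be disjoint sets, let U ∈ (Γ ∪ V)* be a word, let X ∈ V, and let σ be a substitution with σ(X) = b·w for a letter b ∈ Γ and a word w ∈ Γ*. Let U' be the word obtained from U by replacing every occurrence of X by the two-symbol word b·X, and let σ' be the substitution equal to σ except that σ'(X) = w. Then σ̂'(U') = σ̂(U), where σ̂ and σ̂' are the monoid morphisms extending σ and σ' that fix all letters. Consequently, for words U, V₀ ∈ (Γ ∪ V)* and U', V₀' obtained by this replacement, σ is a solution of the equation U = V₀ if and only if σ' is a solution of U' = V₀'. -/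
lemma substApp_pop {A : Type*} [DecidableEq A] (V : Finset A)
    (X : A) (hX : X ∈ V) (b : A) (hbV : b ∉ V)
    (w : List A) (σ : A → List A) (hσX : σ X = b :: w) (L : List A) :
    substApp V (Function.update σ X w) (L.flatMap (fun y => if y = X then [b, X] else [y]))
      = substApp V σ L := by
  induction L with
  | nil => rfl
  | cons a L ih =>
    simp only [List.flatMap_cons, substApp, List.flatMap_append] at *
    rw [ih]
    congr 1
    by_cases h : a = X
    · subst h
      simp [hX, hbV, hσX]
    · simp only [if_neg h, List.flatMap_cons, List.flatMap_nil, List.append_nil]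
      rw [Function.update_of_ne h]

/-- popping the first letter of a variable. If `σ X = b :: w` and `U'`
(resp. `V₀'`) is obtained from `U` (resp. `V₀`) by replacing every occurrence of the
variable `X` by the two-symbol word `b :: X`, and `σ'` equals `σ` except `σ' X = w`,
then `σ̂' U' = σ̂ U`; consequently `σ` solves `U = V₀` iff `σ'` solves `U' = V₀'`. -/
theorem stmt7 {A : Type*} [DecidableEq A] (Γ V : Finset A) (hdisj : Disjoint Γ V)
    (X : A) (hX : X ∈ V) (b : A) (hb : b ∈ Γ)
    (w : List A) (hw : ∀ y ∈ w, y ∈ Γ)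
    (σ : A → List A) (hσX : σ X = b :: w)
    (U V₀ U' V₀' : List A)
    (hU : ∀ y ∈ U, y ∈ Γ ∪ V) (hV₀ : ∀ y ∈ V₀, y ∈ Γ ∪ V)
    (hU' : U' = U.flatMap (fun y => if y = X then [b, X] else [y]))
    (hV₀' : V₀' = V₀.flatMap (fun y => if y = X then [b, X] else [y])) :
    substApp V (Function.update σ X w) U' = substApp V σ U ∧
    (substApp V σ U = substApp V σ V₀ ↔
      substApp V (Function.update σ X w) U' = substApp V (Function.update σ X w) V₀') := by
  have hbV : b ∉ V := fun h => (Finset.disjoint_left.mp hdisj hb) h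
  subst hU' hV₀'
  rw [substApp_pop V X hX b hbV w σ hσX, substApp_pop V X hX b hbV w σ hσX]
  exact ⟨rfl, Iff.rfl⟩
end

section
/- Let t : ℕ → ℝ be a sequence with t(i) ≥ 0 for all i, t nonincreasing (t(i+1) ≤ t(i) for all i), and t(i+4) ≤ t(i)/2 for all i ≥ 1. Then for every N ≥ 1, the partial sum ∑_{i=1}^{N} i·t(i) ≤ 52·t(1). -/
/-- if `t : ℕ → ℝ` is nonnegative, nonincreasing, and at least halves
every fourth step from index 1 onwards, then `∑_{i=1}^{N} i·t(i) ≤ 52·t(1)`. -/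
theorem stmt11 (t : ℕ → ℝ) (hnn : ∀ i, 0 ≤ t i)
    (hmono : ∀ i, t (i + 1) ≤ t i)
    (hhalf : ∀ i, 1 ≤ i → t (i + 4) ≤ t i / 2)
    (N : ℕ) (hN : 1 ≤ N) :
    ∑ i ∈ Finset.Icc 1 N, (i : ℝ) * t i ≤ 52 * t 1 := by
  have aux : ∀ k : ℕ, ∑ i ∈ Finset.Icc 1 (4*k), (i : ℝ) * t i
      + (32*(k:ℝ)+52) * t (4*k+1) ≤ 52 * t 1 := by
    intro k
    induction k with
    | zero => simp
    | succ k ih =>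
      have hsplit : ∑ i ∈ Finset.Icc 1 (4*(k+1)), (i : ℝ) * t i
          = ∑ i ∈ Finset.Icc 1 (4*k), (i : ℝ) * t i
            + (((4*k+1 : ℕ) : ℝ) * t (4*k+1) + ((4*k+2 : ℕ) : ℝ) * t (4*k+2)
              + ((4*k+3 : ℕ) : ℝ) * t (4*k+3) + ((4*k+4 : ℕ) : ℝ) * t (4*k+4)) := by
        have h1 : Finset.Icc 1 (4*(k+1))
            = Finset.Icc 1 (4*k) ∪ {4*k+1, 4*k+2, 4*k+3, 4*k+4} := by
          ext x; simp [Finset.mem_Icc]; omega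
        rw [h1, Finset.sum_union]
        · have : ∑ i ∈ ({4*k+1, 4*k+2, 4*k+3, 4*k+4} : Finset ℕ), (i : ℝ) * t i
              = ((4*k+1 : ℕ) : ℝ) * t (4*k+1) + ((4*k+2 : ℕ) : ℝ) * t (4*k+2)
              + ((4*k+3 : ℕ) : ℝ) * t (4*k+3) + ((4*k+4 : ℕ) : ℝ) * t (4*k+4) := by
            rw [Finset.sum_insert (by simp), Finset.sum_insert (by simp only [Finset.mem_insert, Finset.mem_singleton]; omega),
              Finset.sum_insert (by simp only [Finset.mem_insert, Finset.mem_singleton]; omega), Finset.sum_singleton]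
            ring
          rw [this]
        · rw [Finset.disjoint_left]; intro a ha hb
          simp [Finset.mem_Icc] at ha hb; omega
      have h2 : t (4*k+2) ≤ t (4*k+1) := by
        simpa [show 4*k+1+1 = 4*k+2 from by omega] using hmono (4*k+1)
      have h3 : t (4*k+3) ≤ t (4*k+2) := by
        simpa [show 4*k+2+1 = 4*k+3 from by omega] using hmono (4*k+2)
      have h4 : t (4*k+4) ≤ t (4*k+3) := by
        simpa [show 4*k+3+1 = 4*k+4 from by omega] using hmono (4*k+3)
      have h5 : t (4*(k+1)+1) ≤ t (4*k+1) / 2 := by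
        simpa [show 4*k+1+4 = 4*(k+1)+1 from by omega] using hhalf (4*k+1) (by omega)
      have hk0 : (0:ℝ) ≤ (k:ℝ) := Nat.cast_nonneg k
      rw [hsplit]
      push_cast
      push_cast at ih
      nlinarith [hnn (4*k+1), hnn (4*(k+1)+1)]
  have hsub : ∑ i ∈ Finset.Icc 1 N, (i : ℝ) * t i
      ≤ ∑ i ∈ Finset.Icc 1 (4*N), (i : ℝ) * t i := by
    apply Finset.sum_le_sum_of_subset_of_nonneg
    · intro x hx; simp [Finset.mem_Icc] at hx ⊢; omega
    · intro i _ _; exact mul_nonneg (Nat.cast_nonneg i) (hnn i)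
  have := aux N
  have hpos : 0 ≤ (32*(N:ℝ)+52) * t (4*N+1) := mul_nonneg (by positivity) (hnn _)
  linarith
end

section
/- Let p, p₁, p₂ be real numbers with p ≥ 0, p₁ ≥ 0, p₂ ≥ 0 and p₁ + p₂ ≥ p − 4. Then 25 + (p₁·(p₁+1) + p₂·(p₂+1))/2 ≥ p·log₂(p+1), where log₂ denotes the base-2 logarithm. -/
/-- if `p, p₁, p₂ ≥ 0` and `p₁ + p₂ ≥ p − 4`, then
`25 + (p₁·(p₁+1) + p₂·(p₂+1))/2 ≥ p·log₂(p+1)`. -/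
theorem stmt15 (p p₁ p₂ : ℝ) (hp : 0 ≤ p) (hp₁ : 0 ≤ p₁) (hp₂ : 0 ≤ p₂)
    (hsum : p - 4 ≤ p₁ + p₂) :
    p * Real.logb 2 (p + 1) ≤ 25 + (p₁ * (p₁ + 1) + p₂ * (p₂ + 1)) / 2 := by
  set L := Real.log 2 with hLdef
  have hL1 : (0.6931471803 : ℝ) < L := Real.log_two_gt_d9
  have hL2 : L < 0.6931471808 := Real.log_two_lt_d9
  have hL0 : (0:ℝ) < L := by linarith
  have hp1 : (0:ℝ) < p + 1 := by linarith
  rw [Real.logb, ← hLdef, ← mul_div_assoc, div_le_iff₀ hL0]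
  have hlog : Real.log (p + 1) ≤ p := by
    have := Real.log_le_sub_one_of_pos hp1
    linarith
  rcases le_or_gt p 4 with hc | hc
  · -- small p : LHS ≤ p^2 / L ≤ 16, RHS ≥ 25 L > 16
    have h1 : p * Real.log (p + 1) ≤ p * p :=
      mul_le_mul_of_nonneg_left hlog hp
    nlinarith [mul_nonneg hp₁ (by linarith : (0:ℝ) ≤ p₁ + 1),
      mul_nonneg hp₂ (by linarith : (0:ℝ) ≤ p₂ + 1)]
  · -- large p : tangent line at 16
    have hlog2 : Real.log (p + 1) ≤ 4 * L + (p - 15) / 16 := by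
      have h := Real.log_le_sub_one_of_pos (x := (p + 1) / 16) (by positivity)
      rw [Real.log_div (by linarith) (by norm_num)] at h
      have h16 : Real.log 16 = 4 * L := by
        rw [show (16:ℝ) = 2 ^ 4 by norm_num, Real.log_pow]
        push_cast; ring
      linarith
    have hq : (p - 4) ^ 2 / 2 + (p - 4) ≤ p₁ * (p₁ + 1) + p₂ * (p₂ + 1) := by
      nlinarith [sq_nonneg (p₁ - p₂),
        mul_nonneg (sub_nonneg.2 hsum) (by linarith : (0:ℝ) ≤ p₁ + p₂ + (p - 4))]
    have h1 : p * Real.log (p + 1) ≤ p * (4 * L + (p - 15) / 16) :=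
      mul_le_mul_of_nonneg_left hlog2 hp
    have hkey : 0 ≤ (4 * L - 1) * p ^ 2 - (88 * L - 15) * p + 432 * L := by
      nlinarith [sq_nonneg (2 * (4 * L - 1) * p - (88 * L - 15)),
        mul_pos (by linarith : (0:ℝ) < L - 0.6931471803)
          (by linarith : (0:ℝ) < 0.6931471808 - L)]
    nlinarith [h1, hq, hkey, hL0]
end
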